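/- For all integers l ≥ 1 and m ≥ 2: (i) the dehomogenization of G_{l,m} = x·(y·x^l + z^{l+1})^m − z^{(l+1)·m+1} at p = [0:1:0], namely x·(x^l + z^{l+1})^m − z^{(l+1)·m+1} ∈ ℂ[x,z], has multiplicity l·m + 1 at the origin; (ii) the dehomogenization at q = [1:0:0], namely (y + z^{l+1})^m − z^{(l+1)·m+1} ∈ ℂ[y,z], has multiplicity m at the origin. -/

import Mathlib

open MvPolynomial

/-- `x·(x^l + z^{l+1})^m − z^{(l+1)·m+1}`, the dehomogenization of `G_{l,m}` at `[0:1:0]`,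
as a polynomial in `ℂ[x,z]` with `x = X 0`, `z = X 1`. -/
noncomputable def Gdehom_p (l m : ℕ) : MvPolynomial (Fin 2) ℂ :=
  X 0 * (X 0 ^ l + X 1 ^ (l + 1)) ^ m - X 1 ^ ((l + 1) * m + 1)

/-- `(y + z^{l+1})^m − z^{(l+1)·m+1}`, the dehomogenization of `G_{l,m}` at `[1:0:0]`,
as a polynomial in `ℂ[y,z]` with `y = X 0`, `z = X 1`. -/
noncomputable def Gdehom_q (l m : ℕ) : MvPolynomial (Fin 2) ℂ :=
  (X 0 + X 1 ^ (l + 1)) ^ m - X 1 ^ ((l + 1) * m + 1)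

/-!
Expanding `x^c (x^a + z^b)^m` binomially, the term `x^{am+c}` has degree `am + c` and every other
term `x^{ak+c} z^{b(m-k)}`, `k < m`, has strictly larger degree because `a < b`; so has
`z^N` once `N > am + c`. Hence the lowest nonzero homogeneous component is `x^{am+c}`.
Both dehomogenizations are of this shape, with `(a, b, c) = (l, l+1, 1)` at `p` and
`(a, b, c) = (1, l+1, 0)` at `q`.
-/

namespace MvPolynomial

variable {σ R : Type*}

section CommSemiring

variable [CommSemiring R]

theorem homogeneousComponent_eq_zero_of_isHomogeneous {d n : ℕ} {f : MvPolynomial σ R}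
    (hf : f.IsHomogeneous d) (hn : n ≠ d) : homogeneousComponent n f = 0 := by
  rw [homogeneousComponent_of_mem hf, if_neg hn]

theorem homogeneousComponent_sum_eq_zero {ι : Type*} {s : Finset ι}
    {f : ι → MvPolynomial σ R} {deg : ι → ℕ} {n : ℕ}
    (hf : ∀ i ∈ s, (f i).IsHomogeneous (deg i)) (hn : ∀ i ∈ s, n ≠ deg i) :
    homogeneousComponent n (∑ i ∈ s, f i) = 0 := by
  rw [map_sum]
  exact Finset.sum_eq_zero fun i hi =>
    homogeneousComponent_eq_zero_of_isHomogeneous (hf i hi) (hn i hi)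

theorem homogeneousComponent_add_of_isHomogeneous {d : ℕ} {f g : MvPolynomial σ R}
    (hf : f.IsHomogeneous d) (hg : ∀ n ≤ d, homogeneousComponent n g = 0) :
    (∀ n < d, homogeneousComponent n (f + g) = 0) ∧ homogeneousComponent d (f + g) = f := by
  refine ⟨fun n hn => ?_, ?_⟩
  · rw [map_add, homogeneousComponent_eq_zero_of_isHomogeneous hf hn.ne, hg n hn.le, add_zero]
  · rw [map_add, homogeneousComponent_eq_self hf, hg d le_rfl, add_zero]

theorem X_pow_mul_add_pow_eq (i j : σ) (a b c m : ℕ) :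
    (X i ^ c * (X i ^ a + X j ^ b) ^ m : MvPolynomial σ R) =
      X i ^ (a * m + c) +
        ∑ k ∈ Finset.range m, C (m.choose k : R) * X i ^ (a * k + c) * X j ^ (b * (m - k)) := by
  rw [add_pow, Finset.sum_range_succ, mul_add, Finset.mul_sum, add_comm]
  congr 1
  · simp [← pow_mul, ← pow_add, add_comm]
  · refine Finset.sum_congr rfl fun k _ => ?_
    rw [← map_natCast C]
    ring

end CommSemiring

theorem homogeneousComponent_X_pow_mul_add_pow_sub [CommRing R] [Nontrivial R] (i j : σ)
    {a b c m N : ℕ} (hab : a < b) (hN : a * m + c < N) :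
    letI p : MvPolynomial σ R := X i ^ c * (X i ^ a + X j ^ b) ^ m - X j ^ N
    (∀ n < a * m + c, homogeneousComponent n p = 0) ∧
      homogeneousComponent (a * m + c) p ≠ 0 := by
  have hterm : ∀ k < m, a * m + c < a * k + c + b * (m - k) := fun k hk => by
    have : a * (m - k) < b * (m - k) := Nat.mul_lt_mul_of_pos_right hab (by omega)
    have : a * m = a * k + a * (m - k) := by rw [← mul_add, Nat.add_sub_cancel' hk.le]
    omega
  have hhigher : ∀ n ≤ a * m + c, homogeneousComponent n
      (∑ k ∈ Finset.range m, C (m.choose k : R) * X i ^ (a * k + c) * X j ^ (b * (m - k)) -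
        X j ^ N) = 0 := fun n hn => by
    rw [map_sub, homogeneousComponent_sum_eq_zero
        (fun k _ => (isHomogeneous_C_mul_X_pow _ i _).mul (isHomogeneous_X_pow j _))
        (fun k hk => (hn.trans_lt (hterm k (Finset.mem_range.1 hk))).ne),
      homogeneousComponent_eq_zero_of_isHomogeneous (isHomogeneous_X_pow j N) (hn.trans_lt hN).ne,
      sub_zero]
  obtain ⟨hlow, hlead⟩ :=
    homogeneousComponent_add_of_isHomogeneous (isHomogeneous_X_pow i (a * m + c)) hhigher
  simp only [X_pow_mul_add_pow_eq, add_sub_assoc]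
  exact ⟨hlow, by rw [hlead, X_pow_eq_monomial]; simp⟩

end MvPolynomial

theorem stmt_6 (l m : ℕ) (hl : 1 ≤ l) (hm : 2 ≤ m) :
    ((∀ n < l * m + 1, homogeneousComponent n (Gdehom_p l m) = 0) ∧
      homogeneousComponent (l * m + 1) (Gdehom_p l m) ≠ 0) ∧
    ((∀ n < m, homogeneousComponent n (Gdehom_q l m) = 0) ∧
      homogeneousComponent m (Gdehom_q l m) ≠ 0) := by
  have hp := homogeneousComponent_X_pow_mul_add_pow_sub (σ := Fin 2) (R := ℂ) 0 1
    (a := l) (b := l + 1) (c := 1) (m := m) (N := (l + 1) * m + 1) (by omega) (by nlinarith)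
  have hq := homogeneousComponent_X_pow_mul_add_pow_sub (σ := Fin 2) (R := ℂ) 0 1
    (a := 1) (b := l + 1) (c := 0) (m := m) (N := (l + 1) * m + 1) (by omega) (by nlinarith)
  simp only [pow_one, pow_zero, one_mul, add_zero] at hp hq
  exact ⟨hp, hq⟩
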